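/- Let x : [0,∞) → ℝ be a function having a left limit x(s−) at every s > 0 (for instance, any càdlàg function), and for s > 0 define σ_x(s) = inf{ t > s : x(t) < x(s−) } ∈ (s, ∞] (with σ_x(s) = ∞ if no such t exists). Then for all 0 < s₁ < s₂: either the open intervals (s₁, σ_x(s₁)) and (s₂, σ_x(s₂)) are disjoint, or (s₂, σ_x(s₂)) ⊆ (s₁, σ_x(s₁)). -/
import Mathlib


open Filter Topology

/-- The left-limit value `x(s−)` (for `s > 0`). -/
noncomputable def leftVal (x : ℝ → ℝ) (s : ℝ) : ℝ :=
  if s ≤ 0 then x 0 else limUnder (nhdsWithin s (Set.Iio s)) x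

/-- `σ_x(s) = inf{t > s : x(t) < x(s−)} ∈ (s, ∞]`, as an extended real. -/
noncomputable def sigmaE (x : ℝ → ℝ) (s : ℝ) : EReal :=
  sInf ((fun t : ℝ => (t : EReal)) '' {t : ℝ | s < t ∧ x t < leftVal x s})

/-- The open interval `(s, σ_x(s))` of the (extended) half-line, as a subset of `ℝ`. -/
def sigmaIntvl (x : ℝ → ℝ) (s : ℝ) : Set ℝ :=
  {t : ℝ | s < t ∧ (t : EReal) < sigmaE x s}

/-- If `x` has left limits at every `s > 0`, then for `0 < s₁ < s₂` the intervals
`(s₁, σ_x(s₁))` and `(s₂, σ_x(s₂))` are either disjoint or nested: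
`(s₂, σ_x(s₂)) ⊆ (s₁, σ_x(s₁))`. -/
theorem stmt16 (x : ℝ → ℝ)
    (hleft : ∀ s : ℝ, 0 < s → ∃ L, Filter.Tendsto x (nhdsWithin s (Set.Iio s)) (nhds L))
    (s₁ s₂ : ℝ) (hs₁ : 0 < s₁) (hs : s₁ < s₂) :
    Disjoint (sigmaIntvl x s₁) (sigmaIntvl x s₂) ∨
      sigmaIntvl x s₂ ⊆ sigmaIntvl x s₁ := by
  by_cases h : (s₂ : EReal) < sigmaE x s₁
  · right
    have hs₂pos : 0 < s₂ := hs₁.trans hs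
    obtain ⟨L₂, hL₂⟩ := hleft s₂ hs₂pos
    have hv₂ : leftVal x s₂ = L₂ := by
      rw [leftVal, if_neg (not_le.mpr hs₂pos)]
      exact hL₂.limUnder_eq
    -- x u ≥ leftVal x s₁ on (s₁, s₂)
    have hmem : ∀ u, s₁ < u → u < s₂ → leftVal x s₁ ≤ x u := by
      intro u hu₁ hu₂
      by_contra hlt
      push_neg at hlt
      have h1 : sigmaE x s₁ ≤ (u : EReal) := sInf_le ⟨u, ⟨hu₁, hlt⟩, rfl⟩
      have h2 : (u : EReal) < (s₂ : EReal) := by exact_mod_cast hu₂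
      exact absurd ((h1.trans_lt h2).trans h) (lt_irrefl _)
    -- leftVal x s₁ ≤ L₂
    have hLle : leftVal x s₁ ≤ L₂ := by
      refine ge_of_tendsto hL₂ ?_
      filter_upwards [Ioo_mem_nhdsLT_of_mem (Set.mem_Ioc.mpr ⟨hs, le_refl s₂⟩)]
        with u hu
      exact hmem u hu.1 hu.2
    -- sigmaE x s₂ ≤ sigmaE x s₁
    have hsub : ((fun t : ℝ => (t : EReal)) '' {t : ℝ | s₁ < t ∧ x t < leftVal x s₁}) ⊆
        ((fun t : ℝ => (t : EReal)) '' {t : ℝ | s₂ < t ∧ x t < leftVal x s₂}) := by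
      rintro _ ⟨t, ⟨ht₁, ht₂⟩, rfl⟩
      refine ⟨t, ⟨?_, ?_⟩, rfl⟩
      · have h1 : sigmaE x s₁ ≤ (t : EReal) := sInf_le ⟨t, ⟨ht₁, ht₂⟩, rfl⟩
        exact_mod_cast h.trans_le h1
      · rw [hv₂]; exact ht₂.trans_le hLle
    have hσ : sigmaE x s₂ ≤ sigmaE x s₁ := sInf_le_sInf hsub
    intro t ht
    exact ⟨hs.trans ht.1, ht.2.trans_le hσ⟩
  · left
    rw [Set.disjoint_left]
    rintro t ⟨ht₁, ht₂⟩ ⟨ht₃, _⟩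
    have : (t : EReal) < (s₂ : EReal) := ht₂.trans_le (not_lt.mp h)
    have : t < s₂ := by exact_mod_cast this
    exact absurd ht₃ (not_lt.mpr this.le)
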